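/- arXiv:2104.13315 — 3 statements merged into one kernel-verified Lean document; each statement's English description precedes it below -/
import Mathlib

section
/- For sets of predicates P ⊆ P* (both containing the predicate true) and any expression e of a DSL and any input x, the concrete value semantics implies the abstract semantics under P*, and the abstract semantics under P* implies the abstract semantics under P; i.e., (s = ⟦e⟧x) ⟹ ⟦e⟧^{P*}x and ⟦e⟧^{P*}x ⟹ ⟦e⟧^P x. In other words, adding predicates makes abstract execution more precise while remaining sound. -/
/-- Expressions of a DSL: terminals (constants or the input variable, whose
concrete value on a given input is given by `tsem`) and function applications. -/
inductive Expr (τ σ : Type) : Type where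
  | term : τ → Expr τ σ
  | app : σ → List (Expr τ σ) → Expr τ σ

/-- Abstraction map: strongest conjunction (intersection) of predicates in `P`
implied by the abstract value `φ` (predicates modeled by their denotations). -/
def alphaP {V : Type} (P : Set (Set V)) (φ : Set V) : Set V :=
  ⋂₀ {q ∈ P | φ ⊆ q}

/-- Concrete execution semantics. -/
def concExec {V τ σ : Type} (tsem : τ → V) (fsem : σ → List V → V) :
    Expr τ σ → V
  | .term t => tsem t
  | .app f args => fsem f (args.attach.map (fun a => concExec tsem fsem a.1))
termination_by e => sizeOf e
decreasing_by have := List.sizeOf_lt_of_mem a.2; simp; omega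

/-- Abstract execution semantics under a predicate set `P`, using the abstract
transformer `F`. -/
def absExec {V τ σ : Type} (P : Set (Set V)) (tsem : τ → V)
    (F : σ → List (Set V) → Set V) : Expr τ σ → Set V
  | .term t => alphaP P {tsem t}
  | .app f args => alphaP P (F f (args.attach.map (fun a => absExec P tsem F a.1)))
termination_by e => sizeOf e
decreasing_by have := List.sizeOf_lt_of_mem a.2; simp; omega

lemma subset_alphaP {V : Type} (P : Set (Set V)) (φ : Set V) : φ ⊆ alphaP P φ :=
  fun _ hx _ hq => hq.2 hx

lemma alphaP_mono {V : Type} (P : Set (Set V)) {φ ψ : Set V} (h : φ ⊆ ψ) :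
    alphaP P φ ⊆ alphaP P ψ :=
  fun _ hx q hq => hx q ⟨hq.1, h.trans hq.2⟩

lemma alphaP_anti {V : Type} {P Q : Set (Set V)} (h : P ⊆ Q) (φ : Set V) :
    alphaP Q φ ⊆ alphaP P φ :=
  fun _ hx q hq => hx q ⟨h hq.1, hq.2⟩

lemma List.forall₂_attach_map {α β γ : Type} {R : β → γ → Prop} (l : List α)
    (f : α → β) (g : α → γ) (h : ∀ a : {x // x ∈ l}, R (f a.1) (g a.1)) :
    List.Forall₂ R (l.attach.map fun a => f a.1) (l.attach.map fun a => g a.1) := by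
  rw [List.forall₂_map_left_iff, List.forall₂_map_right_iff]
  exact List.forall₂_same.2 fun a _ => h a

section Execution

variable {V τ σ : Type} (tsem : τ → V) (fsem : σ → List V → V)
  (F : σ → List (Set V) → Set V)

theorem concExec_mem_absExec (P : Set (Set V))
    (hsound : ∀ (f : σ) (vs : List V) (φs : List (Set V)),
      List.Forall₂ (fun v φ => v ∈ φ) vs φs → fsem f vs ∈ F f φs) :
    ∀ e : Expr τ σ, concExec tsem fsem e ∈ absExec P tsem F e
  | .term t => by
    rw [concExec, absExec]
    exact subset_alphaP P _ rfl
  | .app f args => by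
    rw [concExec, absExec]
    exact subset_alphaP P _ <| hsound f _ _ <| List.forall₂_attach_map args _ _
      fun a => concExec_mem_absExec P hsound a.1
termination_by e => sizeOf e
decreasing_by have := List.sizeOf_lt_of_mem a.2; simp; omega

theorem absExec_subset_absExec {P Q : Set (Set V)} (hPQ : P ⊆ Q)
    (hmono : ∀ (f : σ) (φs ψs : List (Set V)),
      List.Forall₂ (fun φ ψ => φ ⊆ ψ) φs ψs → F f φs ⊆ F f ψs) :
    ∀ e : Expr τ σ, absExec Q tsem F e ⊆ absExec P tsem F e
  | .term t => by
    rw [absExec, absExec]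
    exact alphaP_anti hPQ _
  | .app f args => by
    rw [absExec, absExec]
    refine (alphaP_mono Q <| hmono f _ _ ?_).trans (alphaP_anti hPQ _)
    exact List.forall₂_attach_map args _ _
      fun a => absExec_subset_absExec hPQ hmono a.1
termination_by e => sizeOf e
decreasing_by have := List.sizeOf_lt_of_mem a.2; simp; omega

end Execution

theorem stmt1_general {V τ σ : Type} (P Pstar : Set (Set V))
    (hPP : P ⊆ Pstar)
    (tsem : τ → V) (fsem : σ → List V → V) (F : σ → List (Set V) → Set V)
    -- soundness of the abstract transformer
    (hsound : ∀ (f : σ) (vs : List V) (φs : List (Set V)),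
      List.Forall₂ (fun v φ => v ∈ φ) vs φs → fsem f vs ∈ F f φs)
    -- monotonicity of the abstract transformer
    (hmono : ∀ (f : σ) (φs ψs : List (Set V)),
      List.Forall₂ (fun φ ψ => φ ⊆ ψ) φs ψs → F f φs ⊆ F f ψs)
    (e : Expr τ σ) :
    concExec tsem fsem e ∈ absExec Pstar tsem F e ∧
      absExec Pstar tsem F e ⊆ absExec P tsem F e :=
  ⟨concExec_mem_absExec tsem fsem F Pstar hsound e,
    absExec_subset_absExec tsem F hPP hmono e⟩

theorem stmt1 {V τ σ : Type} (P Pstar : Set (Set V))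
    (htrue : Set.univ ∈ P) (hPP : P ⊆ Pstar)
    (tsem : τ → V) (fsem : σ → List V → V) (F : σ → List (Set V) → Set V)
    -- soundness of the abstract transformer
    (hsound : ∀ (f : σ) (vs : List V) (φs : List (Set V)),
      List.Forall₂ (fun v φ => v ∈ φ) vs φs → fsem f vs ∈ F f φs)
    -- monotonicity of the abstract transformer
    (hmono : ∀ (f : σ) (φs ψs : List (Set V)),
      List.Forall₂ (fun φ ψ => φ ⊆ ψ) φs ψs → F f φs ⊆ F f ψs)
    (e : Expr τ σ) :
    concExec tsem fsem e ∈ absExec Pstar tsem F e ∧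
      absExec Pstar tsem F e ⊆ absExec P tsem F e :=
  stmt1_general P Pstar hPP tsem fsem F hsound hmono e
end

section
/- Soundness of the synthesis algorithm's termination condition: suppose p* minimizes the abstract objective among all programs in G, i.e., for all p ∈ G, U(L(⟦p*⟧^P x⃗, y⃗), C(p*)) ≤ U(L(⟦p⟧^P x⃗, y⃗), C(p)), and suppose the abstract loss under-approximates the concrete loss for every program. If L(p*[x⃗], y⃗) − L(⟦p*⟧^P x⃗, y⃗) ≤ ε, then for all p ∈ G, U(L(p*[x⃗], y⃗) − ε, C(p*)) ≤ U(L(p[x⃗], y⃗), C(p)); that is, p* is ε-correct. -/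
/-- `Lc p` is the concrete loss `L(p[x⃗], y⃗)`, `La p` the abstract loss `L(⟦p⟧^P x⃗, y⃗)`,
`C p` the complexity and `U` the objective. -/
theorem stmt5_general {G : Type*} {T : Type*} [LinearOrder T]
    (Lc La C : G → ℝ) (U : ℝ → ℝ → T)
    (hUmono : ∀ l l' c c', l ≤ l' → c ≤ c' → U l c ≤ U l' c')
    (hunder : ∀ p : G, La p ≤ Lc p)
    (pstar : G)
    (hmin : ∀ p : G, U (La pstar) (C pstar) ≤ U (La p) (C p))
    (ε : ℝ)
    (hgap : Lc pstar - La pstar ≤ ε) :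
    ∀ p : G, U (Lc pstar - ε) (C pstar) ≤ U (Lc p) (C p) := by
  intro p
  calc U (Lc pstar - ε) (C pstar) ≤ U (La pstar) (C pstar) :=
        hUmono _ _ _ _ (by linarith) le_rfl
    _ ≤ U (La p) (C p) := hmin p
    _ ≤ U (Lc p) (C p) := hUmono _ _ _ _ (hunder p) le_rfl

/-- Soundness of the termination condition: if `p*` minimizes the abstract
objective, the abstract loss under-approximates the concrete loss, and the gap
between concrete and abstract loss at `p*` is at most `ε`, then `p*` is
ε-correct. Here `Lc p` is the concrete loss `L(p[x⃗], y⃗)`, `La p` the abstract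
loss `L(⟦p⟧^P x⃗, y⃗)`, `C p` the complexity, and `U` the objective function,
monotonically non-decreasing in each argument, valued in a total order `T`. -/
theorem stmt5 {G : Type*} {T : Type*} [LinearOrder T]
    (Lc La C : G → ℝ) (U : ℝ → ℝ → T)
    (hLnonneg : ∀ p, 0 ≤ La p) (hCnonneg : ∀ p, 0 ≤ C p)
    (hUmono : ∀ l l' c c', l ≤ l' → c ≤ c' → U l c ≤ U l' c')
    (hunder : ∀ p : G, La p ≤ Lc p)
    (pstar : G)
    (hmin : ∀ p : G, U (La pstar) (C pstar) ≤ U (La p) (C p))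
    (ε : ℝ) (hε : 0 ≤ ε)
    (hgap : Lc pstar - La pstar ≤ ε) :
    ∀ p : G, U (Lc pstar - ε) (C pstar) ≤ U (Lc p) (C p) :=
  stmt5_general Lc La C U hUmono hunder pstar hmin ε hgap
end

section
/- Every program of bounded height is accepted by the abstract finite tree automaton: for the AFTA (Q, Q_f, Δ) constructed from a grammar G, inputs x⃗ = ⟨x₁,…,x_n⟩, and predicates P, every expression e derivable from a symbol s of G with height ≤ b yields a state q^{φ⃗}_s ∈ Q with φ⃗ = ⟨⟦e⟧^P x₁,…,⟦e⟧^P x_n⟩ such that e is accepted by the automaton (Q, {q^{φ⃗}_s}, Δ). -/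
/-- Height of an expression: terminals have height 1. -/
def Expr.height {τ σ : Type} : Expr τ σ → ℕ
  | .term _ => 1
  | .app _ args => 1 + (args.attach.map (fun a => Expr.height a.1)).foldr max 0
termination_by e => sizeOf e
decreasing_by have := List.sizeOf_lt_of_mem a.2; simp; omega

/-- A production `s → f(s₁,…,s_k)` of the DSL grammar. -/
structure Production (N σ : Type) where
  lhs : N
  f : σ
  rhs : List N

/-- Derivation of an expression from a nonterminal `s`: `D s t` allows the
terminal production `s → t`; internal nodes use productions in `Prods`. -/
inductive GDerives {N τ σ : Type} (D : N → τ → Prop)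
    (Prods : Set (Production N σ)) : N → Expr τ σ → Prop where
  | term (s : N) (t : τ) : D s t → GDerives D Prods s (.term t)
  | app (p : Production N σ) (hp : p ∈ Prods) (kids : List (Expr τ σ))
      (h : List.Forall₂ (GDerives D Prods) p.rhs kids) :
      GDerives D Prods p.lhs (.app p.f kids)

/-- Acceptance in the abstract finite tree automaton constructed by the
(Var)/(Const)/(Prod) rules: `AcceptsAt … s φ⃗ e` says that the tree `e` rewrites
(bottom-up) to the state `q^{φ⃗}_s` using the transitions `Δ` of the AFTA built
for inputs `x₁,…,x_n`, predicates `P`, and abstract transformer `F`. -/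
inductive AcceptsAt {V I τ σ N : Type} {n : ℕ} (P : Set (Set V))
    (x : Fin n → I) (tsem : τ → I → V) (F : σ → List (Set V) → Set V)
    (D : N → τ → Prop) (Prods : Set (Production N σ)) :
    N → (Fin n → Set V) → Expr τ σ → Prop where
  | term (s : N) (t : τ) : D s t →
      AcceptsAt P x tsem F D Prods s
        (fun i => alphaP P {tsem t (x i)}) (.term t)
  | app (p : Production N σ) (hp : p ∈ Prods) (kids : List (Expr τ σ))
      (φs : List (Fin n → Set V)) (hlen : p.rhs.length = φs.length)
      (hkids : List.Forall₂ (fun sφ e => AcceptsAt P x tsem F D Prods sφ.1 sφ.2 e)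
        (p.rhs.zip φs) kids) :
      AcceptsAt P x tsem F D Prods p.lhs
        (fun i => alphaP P (F p.f (φs.map (fun φ => φ i)))) (.app p.f kids)

/-! Induction on the derivation: the (Prod) rule computes the abstract vector of a node from
those of its children exactly as `⟦·⟧^P` computes the abstract value of an application, so every
derivable subtree reaches the state labelled by its own abstract values. -/

theorem List.Forall₂.imp_of_mem_right {α β : Type*} {R S : α → β → Prop} {l₁ : List α}
    {l₂ : List β} (h : ∀ a, ∀ b ∈ l₂, R a b → S a b) (hR : List.Forall₂ R l₁ l₂) :
    List.Forall₂ S l₁ l₂ := by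
  induction hR with
  | nil => exact .nil
  | cons hab _ ih =>
    exact .cons (h _ _ List.mem_cons_self hab)
      (ih fun a b hb => h a b (List.mem_cons_of_mem _ hb))

theorem List.Forall₂.zip_map_right {α β γ : Type*} {R : α × γ → β → Prop} (g : β → γ) :
    ∀ {l₁ : List α} {l₂ : List β}, List.Forall₂ (fun a b => R (a, g b) b) l₁ l₂ →
      List.Forall₂ R (l₁.zip (l₂.map g)) l₂
  | _, _, .nil => .nil
  | _, _, .cons hab h => .cons hab (h.zip_map_right g)

section Acceptance

variable {V I τ σ N : Type} {n : ℕ} (P : Set (Set V)) (x : Fin n → I) (tsem : τ → I → V)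
  (F : σ → List (Set V) → Set V) {D : N → τ → Prop} {Prods : Set (Production N σ)}

/-- The vector `⟨⟦e⟧^P x₁, …, ⟦e⟧^P x_n⟩` labelling the state that `e` should reach. -/
def absExecVec (e : Expr τ σ) : Fin n → Set V :=
  fun i => absExec P (fun t => tsem t (x i)) F e

theorem absExecVec_term (t : τ) :
    absExecVec (σ := σ) P x tsem F (.term t) = fun i => alphaP P {tsem t (x i)} := by
  funext i
  rw [absExecVec, absExec]

theorem absExecVec_app (f : σ) (args : List (Expr τ σ)) :
    absExecVec P x tsem F (.app f args) =
      fun i => alphaP P (F f ((args.map (absExecVec P x tsem F)).map (fun φ => φ i))) := by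
  funext i
  rw [absExecVec, absExec, List.attach_map_val, List.map_map]
  rfl

theorem acceptsAt_absExecVec_of_gDerives :
    ∀ {s : N} {e : Expr τ σ}, GDerives D Prods s e →
      AcceptsAt P x tsem F D Prods s (absExecVec P x tsem F e) e
  | _, _, .term s t hst => absExecVec_term P x tsem F t ▸ .term s t hst
  | _, .app _ kids, .app p hp _ hkids => by
    rw [absExecVec_app]
    refine .app p hp kids _ (by rw [List.length_map]; exact hkids.length_eq) ?_
    refine .zip_map_right _ (hkids.imp_of_mem_right fun s e he hse => ?_)
    exact acceptsAt_absExecVec_of_gDerives hse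
termination_by _ e => sizeOf e
decreasing_by have := List.sizeOf_lt_of_mem he; simp; omega

end Acceptance

theorem stmt17_general {V I τ σ N : Type} {n : ℕ} (P : Set (Set V))
    (x : Fin n → I) (tsem : τ → I → V) (F : σ → List (Set V) → Set V)
    (D : N → τ → Prop) (Prods : Set (Production N σ))
    (s : N) (e : Expr τ σ)
    (hder : GDerives D Prods s e) :
    AcceptsAt P x tsem F D Prods s
      (fun i => absExec P (fun t => tsem t (x i)) F e) e :=
  acceptsAt_absExecVec_of_gDerives P x tsem F hder

/-- Every expression of height at most `b` derivable from a symbol `s` of the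
grammar is accepted by the AFTA at the state `q^{φ⃗}_s` whose abstract vector is
`φ⃗ = ⟨⟦e⟧^P x₁, …, ⟦e⟧^P x_n⟩`. -/
theorem stmt17 {V I τ σ N : Type} {n : ℕ} (P : Set (Set V))
    (x : Fin n → I) (tsem : τ → I → V) (F : σ → List (Set V) → Set V)
    (D : N → τ → Prop) (Prods : Set (Production N σ))
    (b : ℕ) (s : N) (e : Expr τ σ)
    (hder : GDerives D Prods s e) (hht : e.height ≤ b) :
    AcceptsAt P x tsem F D Prods s
      (fun i => absExec P (fun t => tsem t (x i)) F e) e :=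
  stmt17_general P x tsem F D Prods s e hder
end
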